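/- arXiv:2411.19917 — 5 statements merged into one kernel-verified Lean document; each statement's English description precedes it below -/
import Mathlib

section
/- Let μ > 0, λ > 0 and b ∈ ℝ. The function P defined on pairs (F, δ) with F a real 2×2 matrix and δ a real number by P(F, δ) = (μ/2)·‖F‖_F² + (λ/4)·δ² − (μ + λ/2)·ln(δ) + b is convex on the set Matrix(2×2, ℝ) × (0, ∞). -/
attribute [local instance] Matrix.frobeniusNormedAddCommGroup Matrix.frobeniusNormedSpace

/-- Let `μ > 0`, `λ > 0` and `b ∈ ℝ`. The function
`P(F, δ) = (μ/2)·‖F‖_F² + (λ/4)·δ² − (μ + λ/2)·ln(δ) + b`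
is convex on `Matrix(2×2, ℝ) × (0, ∞)`. -/
theorem stored_energy_polyconvex (μ lam b : ℝ) (hμ : 0 < μ) (hlam : 0 < lam) :
    ConvexOn ℝ ((Set.univ : Set (Matrix (Fin 2) (Fin 2) ℝ)) ×ˢ Set.Ioi (0 : ℝ))
      (fun p : Matrix (Fin 2) (Fin 2) ℝ × ℝ =>
        μ / 2 * ‖p.1‖ ^ 2 + lam / 4 * p.2 ^ 2 - (μ + lam / 2) * Real.log p.2 + b) := by
  set S : Set (Matrix (Fin 2) (Fin 2) ℝ × ℝ) :=
    (Set.univ : Set (Matrix (Fin 2) (Fin 2) ℝ)) ×ˢ Set.Ioi (0 : ℝ)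
  have hS : Convex ℝ S := (convex_univ).prod (convex_Ioi 0)
  -- norm squared on the whole matrix space
  have hns : ConvexOn ℝ (Set.univ : Set (Matrix (Fin 2) (Fin 2) ℝ))
      (fun F => ‖F‖ ^ 2) := by
    refine ⟨convex_univ, fun x _ y _ a c ha hc hac => ?_⟩
    simp only [smul_eq_mul]
    have h1 : ‖a • x + c • y‖ ≤ a * ‖x‖ + c * ‖y‖ := by
      calc ‖a • x + c • y‖ ≤ ‖a • x‖ + ‖c • y‖ := norm_add_le _ _
        _ = a * ‖x‖ + c * ‖y‖ := by
            rw [norm_smul, norm_smul, Real.norm_eq_abs, Real.norm_eq_abs,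
              abs_of_nonneg ha, abs_of_nonneg hc]
    have h2 : ‖a • x + c • y‖ ^ 2 ≤ (a * ‖x‖ + c * ‖y‖) ^ 2 :=
      pow_le_pow_left₀ (norm_nonneg _) h1 2
    nlinarith [sq_nonneg (‖x‖ - ‖y‖), mul_nonneg ha hc, norm_nonneg x, norm_nonneg y]
  have h1 : ConvexOn ℝ S (fun p : Matrix (Fin 2) (Fin 2) ℝ × ℝ => μ / 2 * ‖p.1‖ ^ 2) := by
    have := (hns.comp_affineMap
      (AffineMap.fst : (Matrix (Fin 2) (Fin 2) ℝ × ℝ) →ᵃ[ℝ] Matrix (Fin 2) (Fin 2) ℝ))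
    exact (this.subset (fun p _ => Set.mem_preimage.mpr (Set.mem_univ _)) hS).smul
      (by positivity)
  have h2 : ConvexOn ℝ S (fun p : Matrix (Fin 2) (Fin 2) ℝ × ℝ => lam / 4 * p.2 ^ 2) := by
    have hsq : ConvexOn ℝ (Set.univ : Set ℝ) (fun x : ℝ => x ^ 2) :=
      (Even.convexOn_pow (by norm_num))
    have := hsq.comp_affineMap
      (AffineMap.snd : (Matrix (Fin 2) (Fin 2) ℝ × ℝ) →ᵃ[ℝ] ℝ)
    exact (this.subset (fun p _ => Set.mem_preimage.mpr (Set.mem_univ _)) hS).smul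
      (by positivity)
  have h3 : ConvexOn ℝ S (fun p : Matrix (Fin 2) (Fin 2) ℝ × ℝ =>
      -((μ + lam / 2) * Real.log p.2)) := by
    have hlog : ConvexOn ℝ (Set.Ioi (0 : ℝ)) (fun x => -Real.log x) :=
      strictConcaveOn_log_Ioi.concaveOn.neg
    have := hlog.comp_affineMap
      (AffineMap.snd : (Matrix (Fin 2) (Fin 2) ℝ × ℝ) →ᵃ[ℝ] ℝ)
    have hsub : ConvexOn ℝ S (fun p : Matrix (Fin 2) (Fin 2) ℝ × ℝ => -Real.log p.2) :=
      this.subset (fun p hp => hp.2) hS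
    have := hsub.smul (c := μ + lam / 2) (by positivity)
    simp only [smul_eq_mul] at this
    convert this using 2 with p
    · rfl
    · rfl
    · ring
  have hsum := ((h1.add h2).add h3).add_const b
  convert hsum using 1
  · rfl
  · funext p
    simp only [Pi.add_apply]
    ring
end

section
/- Let μ > 0 and λ > 2μ/(e − 1) be real numbers, where e is Euler's number. Define, for 2×2 real matrices F with det F > 0, the stored energy W(F) = (μ/2)·‖F‖_F² + (λ/4)·(det F)² − (μ + λ/2)·ln(det F) − 3μ/2 − λ/4. Then there exist constants C > 0 and D ∈ ℝ such that for every 2×2 real matrix F with det F > 0, W(F) ≥ C·(‖F‖_F² + (det F)²) + D. -/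
attribute [local instance] Matrix.frobeniusNormedAddCommGroup

/-- Coercivity of the 2D stored energy
`W(F) = (μ/2)·‖F‖_F² + (λ/4)·(det F)² − (μ + λ/2)·ln(det F) − 3μ/2 − λ/4`
under the Lamé-constant condition `λ > 2μ/(e − 1)`:
there exist `C > 0` and `D ∈ ℝ` with `W(F) ≥ C·(‖F‖_F² + (det F)²) + D`
for all `F` with `det F > 0`. -/
theorem stored_energy_coercive (μ lam : ℝ) (hμ : 0 < μ)
    (hlam : lam > 2 * μ / (Real.exp 1 - 1)) :
    ∃ C > (0 : ℝ), ∃ D : ℝ, ∀ F : Matrix (Fin 2) (Fin 2) ℝ, 0 < F.det →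
      μ / 2 * ‖F‖ ^ 2 + lam / 4 * F.det ^ 2 - (μ + lam / 2) * Real.log F.det
          - 3 * μ / 2 - lam / 4
        ≥ C * (‖F‖ ^ 2 + F.det ^ 2) + D := by
  have he : (1 : ℝ) < Real.exp 1 := by
    have := Real.add_one_lt_exp (x := 1) one_ne_zero
    linarith
  have hlam0 : 0 < lam := lt_trans (div_pos (by positivity) (by linarith)) hlam
  set b : ℝ := μ + lam / 2 with hb
  have hbpos : 0 < b := by positivity
  set ε : ℝ := lam / (4 * b) with hε
  have hεpos : 0 < ε := by positivity
  refine ⟨min (μ / 4) (lam / 8), lt_min (by positivity) (by positivity),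
    b / 2 * (Real.log ε + 1) - 3 * μ / 2 - lam / 4, fun F hF => ?_⟩
  set d := F.det
  have hn : (0 : ℝ) ≤ ‖F‖ ^ 2 := by positivity
  have hlog : Real.log (ε * d ^ 2) ≤ ε * d ^ 2 - 1 :=
    Real.log_le_sub_one_of_pos (by positivity)
  have hsplit : Real.log (ε * d ^ 2) = Real.log ε + 2 * Real.log d := by
    rw [Real.log_mul (ne_of_gt hεpos) (by positivity), Real.log_pow]
    push_cast; ring
  have key : b * Real.log d ≤ lam / 8 * d ^ 2 - b / 2 * (1 + Real.log ε) := by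
    have h1 : Real.log ε + 2 * Real.log d ≤ ε * d ^ 2 - 1 := hsplit ▸ hlog
    have hbε : b * ε = lam / 4 := by
      rw [hε, mul_div_assoc', div_eq_iff (by positivity)]; ring
    nlinarith [mul_le_mul_of_nonneg_left h1 (le_of_lt (half_pos hbpos))]
  have hC1 : min (μ / 4) (lam / 8) ≤ μ / 4 := min_le_left _ _
  have hC2 : min (μ / 4) (lam / 8) ≤ lam / 8 := min_le_right _ _
  have hd : (0 : ℝ) ≤ d ^ 2 := sq_nonneg d
  nlinarith [mul_le_mul_of_nonneg_right hC1 hn, mul_le_mul_of_nonneg_right hC2 hd]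
end

section
/- Let μ > 0 and λ > 0, and let F be a 2×2 real matrix with det F > 0. Define the stored energy W(G) = (μ/2)·‖G‖_F² + (λ/4)·(det G)² − (μ + λ/2)·ln(det G) − 3μ/2 − λ/4 for det G > 0, and the stress σ(F) = μ·F + (λ/2)·(det F)²·F⁻ᵀ − (μ + λ/2)·F⁻ᵀ, where F⁻ᵀ = (F⁻¹)ᵀ. Then W has Fréchet derivative at F given by the linear map H ↦ trace(σ(F)ᵀ · H); that is, HasFDerivAt W (H ↦ σ(F) : H) F where M : N = trace(Mᵀ N) denotes the Frobenius inner product. -/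
open scoped Matrix
attribute [local instance] Matrix.frobeniusNormedAddCommGroup Matrix.frobeniusNormedSpace

noncomputable def entryCLM (i j : Fin 2) : Matrix (Fin 2) (Fin 2) ℝ →L[ℝ] ℝ :=
  LinearMap.toContinuousLinearMap (Matrix.entryLinearMap ℝ ℝ i j)

lemma entryCLM_apply (i j : Fin 2) (H : Matrix (Fin 2) (Fin 2) ℝ) : entryCLM i j H = H i j := rfl

lemma hasFDerivAt_entry (i j : Fin 2) (F : Matrix (Fin 2) (Fin 2) ℝ) :
    HasFDerivAt (fun G : Matrix (Fin 2) (Fin 2) ℝ => G i j) (entryCLM i j) F :=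
  (entryCLM i j).hasFDerivAt

lemma frob_norm_sq (A : Matrix (Fin 2) (Fin 2) ℝ) :
    ‖A‖ ^ 2 = A 0 0 ^ 2 + A 0 1 ^ 2 + A 1 0 ^ 2 + A 1 1 ^ 2 := by
  have h := Matrix.frobenius_norm_def A
  have hnn : (0:ℝ) ≤ ∑ i, ∑ j, ‖A i j‖ ^ (2:ℝ) := by positivity
  have : ‖A‖ ^ 2 = ∑ i, ∑ j, ‖A i j‖ ^ (2:ℝ) := by
    rw [h, ← Real.rpow_natCast _ 2, ← Real.rpow_mul hnn]
    norm_num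
  rw [this]
  have h2 : ∀ x : ℝ, x ^ (2:ℝ) = x ^ 2 := fun x => by
    rw [← Real.rpow_natCast x 2]; norm_num
  simp only [Fin.sum_univ_two, Real.norm_eq_abs, h2, sq_abs]
  ring

/-- The stored energy
`W(G) = (μ/2)·‖G‖_F² + (λ/4)·(det G)² − (μ + λ/2)·ln(det G) − 3μ/2 − λ/4`
has Fréchet derivative at `F` (with `det F > 0`) given by the linear map
`H ↦ σ(F) : H = trace(σ(F)ᵀ · H)`, where
`σ(F) = μ·F + (λ/2)·(det F)²·F⁻ᵀ − (μ + λ/2)·F⁻ᵀ` is the stress. -/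
theorem hasFDerivAt_stored_energy (μ lam : ℝ) (hμ : 0 < μ) (hlam : 0 < lam)
    (F : Matrix (Fin 2) (Fin 2) ℝ) (hF : 0 < F.det) :
    HasFDerivAt
      (fun G : Matrix (Fin 2) (Fin 2) ℝ =>
        μ / 2 * ‖G‖ ^ 2 + lam / 4 * G.det ^ 2 - (μ + lam / 2) * Real.log G.det
          - 3 * μ / 2 - lam / 4)
      (LinearMap.toContinuousLinearMap
        ((Matrix.traceLinearMap (Fin 2) ℝ ℝ).comp
          (LinearMap.mulLeft ℝ
            (μ • F + (lam / 2 * F.det ^ 2) • (F⁻¹)ᵀ - (μ + lam / 2) • (F⁻¹)ᵀ)ᵀ)))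
      F := by
  have hdet2 : F.det = F 0 0 * F 1 1 - F 0 1 * F 1 0 := Matrix.det_fin_two F
  have hne : F 0 0 * F 1 1 - F 0 1 * F 1 0 ≠ 0 := by rw [← hdet2]; exact hF.ne'
  have hfun : (fun G : Matrix (Fin 2) (Fin 2) ℝ =>
        μ / 2 * ‖G‖ ^ 2 + lam / 4 * G.det ^ 2 - (μ + lam / 2) * Real.log G.det
          - 3 * μ / 2 - lam / 4)
      = (fun G : Matrix (Fin 2) (Fin 2) ℝ =>
        μ / 2 * (G 0 0 * G 0 0 + G 0 1 * G 0 1 + G 1 0 * G 1 0 + G 1 1 * G 1 1)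
          + lam / 4 * ((G 0 0 * G 1 1 - G 0 1 * G 1 0) * (G 0 0 * G 1 1 - G 0 1 * G 1 0))
          - (μ + lam / 2) * Real.log (G 0 0 * G 1 1 - G 0 1 * G 1 0)
          - 3 * μ / 2 - lam / 4) := by
    funext G; rw [frob_norm_sq, Matrix.det_fin_two]; ring
  rw [hfun]
  have hd := ((hasFDerivAt_entry 0 0 F).mul (hasFDerivAt_entry 1 1 F)).sub
    ((hasFDerivAt_entry 0 1 F).mul (hasFDerivAt_entry 1 0 F))
  have hn := ((((hasFDerivAt_entry 0 0 F).mul (hasFDerivAt_entry 0 0 F)).add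
    ((hasFDerivAt_entry 0 1 F).mul (hasFDerivAt_entry 0 1 F))).add
    ((hasFDerivAt_entry 1 0 F).mul (hasFDerivAt_entry 1 0 F))).add
    ((hasFDerivAt_entry 1 1 F).mul (hasFDerivAt_entry 1 1 F))
  have hd2 := hd.mul hd
  have hlog := hd.log hne
  have htot := ((((hn.const_mul (μ / 2)).add (hd2.const_mul (lam / 4))).sub
    (hlog.const_mul (μ + lam / 2))).sub_const (3 * μ / 2)).sub_const (lam / 4)
  refine htot.congr_fderiv ?_
  ext H
  simp only [ContinuousLinearMap.coe_comp', Function.comp_apply, ContinuousLinearMap.add_apply,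
    ContinuousLinearMap.coe_sub', Pi.sub_apply, ContinuousLinearMap.coe_smul', Pi.smul_apply,
    ContinuousLinearMap.smul_apply, smul_eq_mul, entryCLM_apply,
    LinearMap.coe_toContinuousLinearMap', LinearMap.coe_comp, Matrix.traceLinearMap_apply,
    LinearMap.mulLeft_apply]
  simp only [Pi.mul_apply, LinearMap.coe_toContinuousLinearMap, LinearMap.coe_comp, Function.comp_apply,
    Matrix.traceLinearMap_apply, LinearMap.mulLeft_apply]
  have hs : ∀ (c : ℝ) (i j : Fin 2), (c • entryCLM i j) H = c * H i j := fun _ _ _ => rfl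
  erw [hs, hs, hs, hs, hs, hs, hs, hs]
  erw [LinearMap.coe_toContinuousLinearMap', LinearMap.comp_apply, Matrix.traceLinearMap_apply,
    LinearMap.mulLeft_apply]
  rw [Matrix.inv_def, Matrix.adjugate_fin_two, hdet2]
  simp only [Matrix.trace_fin_two, Matrix.mul_apply, Fin.sum_univ_two, Matrix.transpose_apply,
    Matrix.sub_apply, Matrix.add_apply, Matrix.smul_apply, smul_eq_mul, Matrix.of_apply,
    Matrix.cons_val', Matrix.cons_val_zero, Matrix.cons_val_one, Matrix.head_cons,
    Matrix.head_fin_const, Matrix.empty_val', Matrix.cons_val_fin_one, Ring.inverse_eq_inv']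
  field_simp
  ring
end

section
/- Let μ, λ ∈ ℝ and let F be an invertible real 2×2 matrix. The stress map σ(G) = μ·G + (λ/2)·(det G)²·(G⁻¹)ᵀ − (μ + λ/2)·(G⁻¹)ᵀ has Fréchet derivative at F given by the linear map H ↦ μ·H + (μ + λ/2)·F⁻ᵀ·Hᵀ·F⁻ᵀ + λ·(det F)²·trace(F⁻¹·H)·F⁻ᵀ − (λ/2)·(det F)²·F⁻ᵀ·Hᵀ·F⁻ᵀ, where F⁻ᵀ = (F⁻¹)ᵀ. -/
open scoped Matrix

attribute [local instance] Matrix.frobeniusNormedAddCommGroup Matrix.frobeniusNormedSpace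


attribute [local instance] Matrix.frobeniusNormedRing Matrix.frobeniusNormedAlgebra

/-- The linear map
`H ↦ μ·H + (μ + λ/2)·F⁻ᵀ·Hᵀ·F⁻ᵀ + λ·(det F)²·trace(F⁻¹·H)·F⁻ᵀ − (λ/2)·(det F)²·F⁻ᵀ·Hᵀ·F⁻ᵀ`. -/
noncomputable def stressDeriv (μ lam : ℝ) (F : Matrix (Fin 2) (Fin 2) ℝ) :
    Matrix (Fin 2) (Fin 2) ℝ →ₗ[ℝ] Matrix (Fin 2) (Fin 2) ℝ where
  toFun H := μ • H + (μ + lam / 2) • ((F⁻¹)ᵀ * Hᵀ * (F⁻¹)ᵀ)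
      + (lam * F.det ^ 2 * (F⁻¹ * H).trace) • (F⁻¹)ᵀ
      - (lam / 2 * F.det ^ 2) • ((F⁻¹)ᵀ * Hᵀ * (F⁻¹)ᵀ)
  map_add' x y := by
    simp only [Matrix.mul_add, Matrix.trace_add, Matrix.transpose_add, Matrix.add_mul,
      mul_add, add_smul, smul_add]
    abel
  map_smul' c x := by
    simp only [RingHom.id_apply, Matrix.mul_smul, Matrix.trace_smul, smul_eq_mul,
      Matrix.transpose_smul, Matrix.smul_mul, smul_smul, smul_sub, smul_add]
    ring_nf

/-- Let `μ, λ ∈ ℝ` and let `F` be an invertible real 2×2 matrix. The stress map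
`σ(G) = μ·G + (λ/2)·(det G)²·(G⁻¹)ᵀ − (μ + λ/2)·(G⁻¹)ᵀ` has Fréchet derivative
at `F` given by the linear map
`H ↦ μ·H + (μ + λ/2)·F⁻ᵀ·Hᵀ·F⁻ᵀ + λ·(det F)²·trace(F⁻¹·H)·F⁻ᵀ
     − (λ/2)·(det F)²·F⁻ᵀ·Hᵀ·F⁻ᵀ`. -/
theorem hasFDerivAt_stress (μ lam : ℝ) (F : Matrix (Fin 2) (Fin 2) ℝ) (hF : IsUnit F) :
    HasFDerivAt
      (fun G : Matrix (Fin 2) (Fin 2) ℝ =>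
        μ • G + (lam / 2 * G.det ^ 2) • (G⁻¹)ᵀ - (μ + lam / 2) • (G⁻¹)ᵀ)
      (LinearMap.toContinuousLinearMap (stressDeriv μ lam F)) F := by
  classical
  have hdetu : IsUnit F.det := (Matrix.isUnit_iff_isUnit_det F).mp hF
  -- entry maps
  have hentry : ∀ i j : Fin 2, HasFDerivAt (fun G : Matrix (Fin 2) (Fin 2) ℝ => G i j)
      (LinearMap.toContinuousLinearMap (Matrix.entryLinearMap ℝ ℝ i j)) F := fun i j =>
    (LinearMap.toContinuousLinearMap (Matrix.entryLinearMap ℝ ℝ i j)).hasFDerivAt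
  -- derivative of det
  set detD : Matrix (Fin 2) (Fin 2) ℝ →L[ℝ] ℝ :=
    LinearMap.toContinuousLinearMap
      (F.det • ((Matrix.traceLinearMap (Fin 2) ℝ ℝ).comp (LinearMap.mulLeft ℝ F⁻¹))) with hdetD
  have key : ∀ H : Matrix (Fin 2) (Fin 2) ℝ, F.det * (F⁻¹ * H).trace =
      F 1 1 * H 0 0 + F 0 0 * H 1 1 - (F 0 1 * H 1 0 + F 1 0 * H 0 1) := by
    intro H
    rw [Matrix.inv_def, Matrix.smul_mul, Matrix.trace_smul, smul_eq_mul, ← mul_assoc,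
      mul_comm F.det, Ring.inverse_mul_cancel _ hdetu, one_mul]
    simp [Matrix.adjugate_fin_two, Matrix.trace_fin_two, Matrix.mul_apply, Fin.sum_univ_two,
      Matrix.vecMul, dotProduct]
    ring
  have hdet : HasFDerivAt Matrix.det detD F := by
    have heq : (Matrix.det : Matrix (Fin 2) (Fin 2) ℝ → ℝ) =
        fun G => G 0 0 * G 1 1 - G 0 1 * G 1 0 := funext fun G => Matrix.det_fin_two G
    rw [heq]
    refine HasFDerivAt.congr_fderiv
      (((hentry 0 0).mul (hentry 1 1)).sub ((hentry 0 1).mul (hentry 1 0))) ?_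
    ext H
    simp [hdetD, key H, Matrix.entryLinearMap, smul_eq_mul]
    change F 0 0 * H 1 1 + F 1 1 * H 0 0 - (F 0 1 * H 1 0 + F 1 0 * H 0 1) = F.det * (F⁻¹ * H).trace
    rw [key H]
    ring
  -- derivative of inverse
  have hinv : HasFDerivAt (fun G : Matrix (Fin 2) (Fin 2) ℝ => G⁻¹)
      (-(ContinuousLinearMap.mulLeftRight ℝ _ F⁻¹ F⁻¹)) F := by
    have h := hasFDerivAt_ringInverse (𝕜 := ℝ) hF.unit
    have hcoe : ((hF.unit⁻¹ : (Matrix (Fin 2) (Fin 2) ℝ)ˣ) : Matrix (Fin 2) (Fin 2) ℝ) = F⁻¹ := by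
      rw [Matrix.coe_units_inv, hF.unit_spec]
    have hfun : (Ring.inverse : Matrix (Fin 2) (Fin 2) ℝ → _) = fun G => G⁻¹ :=
      funext fun G => (Matrix.nonsing_inv_eq_ringInverse G).symm
    rw [hcoe, hfun, hF.unit_spec] at h
    exact h
  -- transpose
  set T : Matrix (Fin 2) (Fin 2) ℝ →L[ℝ] Matrix (Fin 2) (Fin 2) ℝ :=
    LinearMap.toContinuousLinearMap
      (Matrix.transposeLinearEquiv (Fin 2) (Fin 2) ℝ ℝ).toLinearMap with hT
  have hinvT : HasFDerivAt (fun G : Matrix (Fin 2) (Fin 2) ℝ => (G⁻¹)ᵀ)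
      (T.comp (-(ContinuousLinearMap.mulLeftRight ℝ _ F⁻¹ F⁻¹))) F :=
    T.hasFDerivAt.comp F hinv
  have hsq : HasFDerivAt (fun G : Matrix (Fin 2) (Fin 2) ℝ => G.det ^ 2)
      (F.det • detD + F.det • detD) F := by
    simp only [pow_two]
    exact hdet.mul hdet
  have hmain := (((hasFDerivAt_id F).const_smul μ).add
    ((hsq.const_mul (lam / 2)).smul hinvT)).sub (hinvT.const_smul (μ + lam / 2))
  refine hmain.congr_fderiv ?_
  ext H : 1
  change μ • H + ((lam / 2 * F.det ^ 2) • (-(F⁻¹ * H * F⁻¹))ᵀ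
      + ((lam / 2) * (F.det * (F.det * (F⁻¹ * H).trace) + F.det * (F.det * (F⁻¹ * H).trace)))
        • (F⁻¹)ᵀ) - (μ + lam / 2) • (-(F⁻¹ * H * F⁻¹))ᵀ =
    μ • H + (μ + lam / 2) • ((F⁻¹)ᵀ * Hᵀ * (F⁻¹)ᵀ)
      + (lam * F.det ^ 2 * (F⁻¹ * H).trace) • (F⁻¹)ᵀ
      - (lam / 2 * F.det ^ 2) • ((F⁻¹)ᵀ * Hᵀ * (F⁻¹)ᵀ)
  simp only [ContinuousLinearMap.add_apply, ContinuousLinearMap.sub_apply,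
    ContinuousLinearMap.smul_apply, ContinuousLinearMap.comp_apply,
    ContinuousLinearMap.smulRight_apply, ContinuousLinearMap.coe_smul', Pi.smul_apply,
    ContinuousLinearMap.neg_apply, ContinuousLinearMap.mulLeftRight_apply,
    ContinuousLinearMap.id_apply, LinearMap.coe_toContinuousLinearMap,
    LinearMap.coe_toContinuousLinearMap', hT, hdetD, Matrix.transposeLinearEquiv,
    Matrix.transposeAddEquiv, AddEquiv.coe_mk, Equiv.coe_fn_mk,
    LinearMap.smul_apply, LinearMap.comp_apply, LinearMap.mulLeft_apply,
    Matrix.traceLinearMap_apply, Matrix.transposeLinearEquiv_apply, stressDeriv,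
    LinearMap.coe_mk, AddHom.coe_mk, smul_eq_mul, Matrix.transpose_neg, Matrix.transpose_mul,
    Matrix.transpose_smul, smul_neg, mul_assoc, Matrix.mul_assoc]
  match_scalars <;> ring
end

section
/- Let μ > 0 and λ > 0, and define for real 2×2 matrices E near 0 the function w(E) = μ·(1 + trace E) + (λ/4)·det(I + 2E) − ((μ + λ/2)/2)·ln(det(I + 2E)) − μ − λ/4. Then as E → 0, w(E) − (λ/2)·(trace E)² − μ·trace(E·E) = O(‖E‖³). -/
/-!
In two dimensions `det (1 + 2E) = 1 + 2 tr E + 4 det E` and `tr (E²) = (tr E)² - 2 det E`, so with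
`t = tr E`, `δ = det E` and `u = 2t + 4δ` the energy `w(E) - (λ/2) t² - μ tr (E²)` equals
`(μ + λ/2) · 4δ(t + δ) - (μ + λ/2)/2 · (log (1 + u) - u + u²/2)` exactly: the terms of order
one and two cancel identically. Since `t = O(‖E‖)`, `δ = O(‖E‖²)` and the Taylor remainder of
`log (1 + u)` is `O(u³)`, both summands are `O(‖E‖³)`.
-/

attribute [local instance] Matrix.frobeniusNormedAddCommGroup Matrix.frobeniusNormedSpace

open Asymptotics Filter Topology

theorem Real.log_one_add_sub_taylor_isBigO :
    (fun x : ℝ => Real.log (1 + x) - x + x ^ 2 / 2) =O[𝓝 0] fun x => x ^ 3 := by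
  refine isBigO_iff.mpr ⟨2, ?_⟩
  filter_upwards [Metric.ball_mem_nhds (0 : ℝ) one_half_pos] with x hx
  rw [Metric.mem_ball, dist_zero_right, Real.norm_eq_abs] at hx
  have h := Real.abs_log_sub_add_sum_range_le (x := -x) (by rw [abs_neg]; linarith) 2
  norm_num [Finset.sum_range_succ] at h
  rw [Real.norm_eq_abs, Real.norm_eq_abs, abs_pow]
  calc |Real.log (1 + x) - x + x ^ 2 / 2| = |-x + x ^ 2 / 2 + Real.log (1 + x)| := by ring_nf
    _ ≤ |x| ^ 3 / (1 - |x|) := h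
    _ ≤ 2 * |x| ^ 3 := by
      rw [div_le_iff₀ (by linarith)]
      nlinarith [pow_nonneg (abs_nonneg x) 3]

namespace Matrix

section FinTwo

variable {R : Type*} [CommRing R]

theorem det_one_add_smul_fin_two (r : R) (A : Matrix (Fin 2) (Fin 2) R) :
    det (1 + r • A) = 1 + r * trace A + r ^ 2 * det A := by
  simp only [det_fin_two, add_apply, one_apply_eq, smul_apply, smul_eq_mul, ne_eq, zero_ne_one,
    not_false_eq_true, one_apply_ne, zero_add, one_ne_zero, trace_fin_two]
  ring

theorem trace_mul_self_fin_two (A : Matrix (Fin 2) (Fin 2) R) :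
    trace (A * A) = trace A ^ 2 - 2 * det A := by
  simp only [trace_fin_two, mul_apply, Fin.sum_univ_two, det_fin_two]
  ring

end FinTwo

variable {𝕜 α n : Type*} [RCLike 𝕜] [Fintype n] {l : Filter α}

theorem isBigO_trace (f : α → Matrix n n 𝕜) : (fun x => trace (f x)) =O[l] fun x => ‖f x‖ :=
  ((traceLinearMap n 𝕜 𝕜).toContinuousLinearMap.isBigO_comp f l).norm_right

theorem isBigO_mul_self (f : α → Matrix n n 𝕜) : (fun x => f x * f x) =O[l] fun x => ‖f x‖ ^ 2 :=
  IsBigO.of_bound 1 (Eventually.of_forall fun x => by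
    simpa [sq] using frobenius_norm_mul (f x) (f x))

theorem isBigO_det_fin_two (f : α → Matrix (Fin 2) (Fin 2) 𝕜) :
    (fun x => det (f x)) =O[l] fun x => ‖f x‖ ^ 2 := by
  have h : ∀ x, det (f x) = 2⁻¹ * (trace (f x) ^ 2 - trace (f x * f x)) := fun x => by
    rw [trace_mul_self_fin_two]; ring
  simp_rw [h]
  exact (((isBigO_trace f).pow 2).sub
    ((isBigO_trace _).trans (isBigO_mul_self f).norm_left)).const_mul_left _

end Matrix

theorem stored_energy_quadratic_expansion_general (μ lam : ℝ) :
    Asymptotics.IsBigO (nhds (0 : Matrix (Fin 2) (Fin 2) ℝ))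
      (fun E : Matrix (Fin 2) (Fin 2) ℝ =>
        (μ * (1 + E.trace)
            + lam / 4 * ((1 : Matrix (Fin 2) (Fin 2) ℝ) + 2 • E).det
            - (μ + lam / 2) / 2 * Real.log (((1 : Matrix (Fin 2) (Fin 2) ℝ) + 2 • E).det)
            - μ - lam / 4)
          - lam / 2 * E.trace ^ 2 - μ * (E * E).trace)
      (fun E : Matrix (Fin 2) (Fin 2) ℝ => ‖E‖ ^ 3) := by
  have htr : (fun E : Matrix (Fin 2) (Fin 2) ℝ => E.trace) =O[𝓝 0] fun E => ‖E‖ :=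
    Matrix.isBigO_trace id
  have hdet₂ : (fun E : Matrix (Fin 2) (Fin 2) ℝ => E.det) =O[𝓝 0] fun E => ‖E‖ ^ 2 :=
    Matrix.isBigO_det_fin_two id
  have hdet₁ : (fun E : Matrix (Fin 2) (Fin 2) ℝ => E.det) =O[𝓝 0] fun E => ‖E‖ :=
    hdet₂.trans (isLittleO_norm_pow_id one_lt_two).isBigO.norm_right
  have hu : (fun E : Matrix (Fin 2) (Fin 2) ℝ => 2 * E.trace + 4 * E.det) =O[𝓝 0] fun E => ‖E‖ :=
    (htr.const_mul_left 2).add (hdet₁.const_mul_left 4)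
  have hcubic :
      (fun E : Matrix (Fin 2) (Fin 2) ℝ => E.det * (E.trace + E.det)) =O[𝓝 0] fun E => ‖E‖ ^ 3 :=
    (hdet₂.mul (htr.add hdet₁)).congr_right fun E => by ring
  have hlog := (Real.log_one_add_sub_taylor_isBigO.comp_tendsto
    (hu.trans_tendsto tendsto_norm_zero)).trans (hu.pow 3)
  have hdet (E : Matrix (Fin 2) (Fin 2) ℝ) :
      ((1 : Matrix (Fin 2) (Fin 2) ℝ) + 2 • E).det = 1 + (2 * E.trace + 4 * E.det) := by
    rw [← ofNat_smul_eq_nsmul ℝ, Matrix.det_one_add_smul_fin_two]; ring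
  refine ((hcubic.const_mul_left (4 * (μ + lam / 2))).sub
    (hlog.const_mul_left ((μ + lam / 2) / 2))).congr_left fun E => ?_
  simp only [Function.comp_apply, hdet, Matrix.trace_mul_self_fin_two]
  ring

/-- Let `μ > 0` and `λ > 0`, and define for real 2×2 matrices `E` the function
`w(E) = μ·(1 + trace E) + (λ/4)·det(I + 2E) − ((μ + λ/2)/2)·ln(det(I + 2E)) − μ − λ/4`.
Then as `E → 0`, `w(E) − (λ/2)·(trace E)² − μ·trace(E·E) = O(‖E‖³)`. -/
theorem stored_energy_quadratic_expansion (μ lam : ℝ) (hμ : 0 < μ) (hlam : 0 < lam) :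
    Asymptotics.IsBigO (nhds (0 : Matrix (Fin 2) (Fin 2) ℝ))
      (fun E : Matrix (Fin 2) (Fin 2) ℝ =>
        (μ * (1 + E.trace)
            + lam / 4 * ((1 : Matrix (Fin 2) (Fin 2) ℝ) + 2 • E).det
            - (μ + lam / 2) / 2 * Real.log (((1 : Matrix (Fin 2) (Fin 2) ℝ) + 2 • E).det)
            - μ - lam / 4)
          - lam / 2 * E.trace ^ 2 - μ * (E * E).trace)
      (fun E : Matrix (Fin 2) (Fin 2) ℝ => ‖E‖ ^ 3) :=
  stored_energy_quadratic_expansion_general μ lam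
end
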